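/- The inverse of the log-mean linear map: if γ = Mᵀ log(Z π) where Z_{D,H} = 1(D ⊆ H), M_{D,H} = (-1)^{|H\D|}1(D ⊆ H), π > 0 entrywise with Σπ = 1, then π = M exp(Zᵀ γ); i.e., the map π ↦ γ is injective on the open simplex and its inverse is given componentwise by π_D = Σ_{H ⊇ D} (-1)^{|H\D|} exp(Σ_{E ⊆ H} γ_E). -/

import Mathlib

/-!
Both `μ ↦ γ` and `π ↦ μ` are Möbius transforms on the lattice of subsets of `V`, downwards and
upwards respectively, and both are inverted by the same identity
`∑_{s ⊆ u ⊆ t} (-1)^|u \ s| = [s = t]`. Hence `∑_{E ⊆ H} γ_E = log μ_H`, and since `μ_H > 0`,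
exponentiating gives back `μ`, from which `π` is recovered by alternating sums over supersets.
This expresses `π` through `γ` alone, which also gives injectivity.
-/

open Finset

/-- Probability that the subvector `X_A` shows the cell pattern `i ⊆ A`
(coordinates in `i` equal to 1, coordinates in `A \ i` equal to 0), for a
binary random vector whose joint distribution on `{0,1}^V` is encoded by the
vector `π` indexed by subsets of `V`. -/
def cellProb {V : Type*} [Fintype V] [DecidableEq V]
    (π : Finset V → ℝ) (A i : Finset V) : ℝ :=
  ∑ H ∈ univ.powerset.filter (fun H => H ∩ A = i), π H

/-- The mean parameter: `μ_D = P(X_D = 1_D)`. -/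
def mu {V : Type*} [Fintype V] [DecidableEq V]
    (π : Finset V → ℝ) (D : Finset V) : ℝ :=
  ∑ H ∈ univ.powerset.filter (fun H => D ⊆ H), π H

/-- The log-mean linear parameter `γ_D = Σ_{E ⊆ D} (-1)^{|D\E|} log μ_E`. -/
noncomputable def gam {V : Type*} [Fintype V] [DecidableEq V]
    (π : Finset V → ℝ) (D : Finset V) : ℝ :=
  ∑ E ∈ D.powerset, (-1 : ℝ) ^ (D \ E).card * Real.log (mu π E)

namespace Finset

section Interval

variable {α M : Type*} [Preorder α] [LocallyFiniteOrder α] [AddCommMonoid M]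

theorem sum_Iic_sum_Iic_comm [LocallyFiniteOrderBot α] (t : α) (f : α → α → M) :
    ∑ x ∈ Iic t, ∑ y ∈ Iic x, f x y = ∑ y ∈ Iic t, ∑ x ∈ Icc y t, f x y :=
  sum_comm' fun x y => by
    simp only [mem_Iic, mem_Icc]
    exact ⟨fun ⟨hxt, hyx⟩ => ⟨⟨hyx, hxt⟩, hyx.trans hxt⟩, fun ⟨⟨hyx, hxt⟩, _⟩ => ⟨hxt, hyx⟩⟩

theorem sum_Ici_sum_Ici_comm [LocallyFiniteOrderTop α] (s : α) (f : α → α → M) :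
    ∑ x ∈ Ici s, ∑ y ∈ Ici x, f x y = ∑ y ∈ Ici s, ∑ x ∈ Icc s y, f x y :=
  sum_comm' fun x y => by
    simp only [mem_Ici, mem_Icc]
    exact ⟨fun ⟨hsx, hxy⟩ => ⟨⟨hsx, hxy⟩, hsx.trans hxy⟩, fun ⟨⟨hsx, hxy⟩, _⟩ => ⟨hsx, hxy⟩⟩

end Interval

variable {α R : Type*} [DecidableEq α] [CommRing R]

theorem sum_Icc_neg_one_pow_card_sdiff {s t : Finset α} (hst : s ⊆ t) :
    ∑ u ∈ Icc s t, (-1 : R) ^ #(u \ s) = if s = t then 1 else 0 := by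
  have hcancel : ∀ u ∈ (t \ s).powerset, (s ∪ u) \ s = u := fun u hu =>
    union_sdiff_cancel_left (disjoint_of_subset_right (mem_powerset.1 hu) disjoint_sdiff)
  have hinj : Set.InjOn (s ∪ ·) (t \ s).powerset := fun u hu v hv huv => by
    rw [← hcancel u hu, ← hcancel v hv]
    exact congrArg (· \ s) huv
  have hempty : t \ s = ∅ ↔ s = t :=
    sdiff_eq_empty_iff_subset.trans ⟨hst.antisymm, fun h => h ▸ subset_rfl⟩
  rw [Icc_eq_image_powerset hst, sum_image hinj, sum_congr rfl fun u hu => by rw [hcancel u hu]]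
  have hint : ∑ u ∈ (t \ s).powerset, (-1 : ℤ) ^ #u = if s = t then 1 else 0 := by
    rw [sum_powerset_neg_one_pow_card]
    simp only [hempty]
  simpa using congrArg (Int.cast : ℤ → R) hint

theorem moebius_inversion_Iic (g : Finset α → R) (t : Finset α) :
    ∑ x ∈ Iic t, ∑ y ∈ Iic x, (-1 : R) ^ #(x \ y) * g y = g t := by
  rw [sum_Iic_sum_Iic_comm]
  simp_rw [← sum_mul]
  rw [sum_congr rfl fun y hy => by rw [sum_Icc_neg_one_pow_card_sdiff (mem_Iic.1 hy)]]
  simp [ite_mul]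

theorem moebius_inversion_Ici [Fintype α] (f : Finset α → R) (s : Finset α) :
    ∑ x ∈ Ici s, (-1 : R) ^ #(x \ s) * ∑ y ∈ Ici x, f y = f s := by
  simp_rw [mul_sum]
  rw [sum_Ici_sum_Ici_comm]
  simp_rw [← sum_mul]
  rw [sum_congr rfl fun y hy => by rw [sum_Icc_neg_one_pow_card_sdiff (mem_Ici.1 hy)]]
  simp [ite_mul]

theorem Ici_eq_filter_powerset_univ [Fintype α] (s : Finset α) :
    Ici s = {u ∈ (univ : Finset α).powerset | s ⊆ u} := by
  rw [Ici_eq_Icc, top_eq_univ, Icc_eq_filter_powerset]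

end Finset

section LogMeanLinear

variable {V : Type*} [Fintype V] [DecidableEq V]

theorem mu_pos {π : Finset V → ℝ} (hpos : ∀ H, 0 < π H) (D : Finset V) : 0 < mu π D :=
  sum_pos (fun H _ => hpos H) ⟨D, by simp⟩

theorem sum_powerset_gam (π : Finset V → ℝ) (H : Finset V) :
    ∑ E ∈ H.powerset, gam π E = Real.log (mu π H) := by
  simpa only [gam, Iic_eq_powerset] using moebius_inversion_Iic (fun E => Real.log (mu π E)) H

theorem eq_sum_neg_one_pow_mul_exp_sum_gam {π : Finset V → ℝ} (hpos : ∀ H, 0 < π H)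
    (D : Finset V) :
    π D = ∑ H ∈ univ.powerset.filter (fun H => D ⊆ H),
      (-1 : ℝ) ^ (H \ D).card * Real.exp (∑ E ∈ H.powerset, gam π E) := by
  simp_rw [sum_powerset_gam, Real.exp_log (mu_pos hpos _), mu, ← Ici_eq_filter_powerset_univ]
  exact (moebius_inversion_Ici π D).symm

end LogMeanLinear

theorem log_mean_linear_inverse_general {V : Type*} [Fintype V] [DecidableEq V]
    (π : Finset V → ℝ) (hpos : ∀ H : Finset V, 0 < π H) :
    (∀ D : Finset V,
        π D = ∑ H ∈ univ.powerset.filter (fun H => D ⊆ H),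
          (-1 : ℝ) ^ (H \ D).card * Real.exp (∑ E ∈ H.powerset, gam π E)) ∧
    (∀ π' : Finset V → ℝ, (∀ H, 0 < π' H) →
        (∑ H ∈ (univ : Finset V).powerset, π' H = 1) →
        (∀ D : Finset V, gam π D = gam π' D) → π = π') := by
  refine ⟨eq_sum_neg_one_pow_mul_exp_sum_gam hpos, fun π' hpos' _ hgam => funext fun D => ?_⟩
  rw [eq_sum_neg_one_pow_mul_exp_sum_gam hpos, eq_sum_neg_one_pow_mul_exp_sum_gam hpos',
    funext hgam]

theorem log_mean_linear_inverse {V : Type*} [Fintype V] [DecidableEq V]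
    (π : Finset V → ℝ) (hpos : ∀ H : Finset V, 0 < π H)
    (hsum : ∑ H ∈ (univ : Finset V).powerset, π H = 1) :
    (∀ D : Finset V,
        π D = ∑ H ∈ univ.powerset.filter (fun H => D ⊆ H),
          (-1 : ℝ) ^ (H \ D).card * Real.exp (∑ E ∈ H.powerset, gam π E)) ∧
    (∀ π' : Finset V → ℝ, (∀ H, 0 < π' H) →
        (∑ H ∈ (univ : Finset V).powerset, π' H = 1) →
        (∀ D : Finset V, gam π D = gam π' D) → π = π') :=
  log_mean_linear_inverse_general π hpos
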